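/- The poset P̂_ℬ associated with a chordal building set ℬ is a bounded graded poset: it contains the empty set as least element and S as greatest element (when ℬ is connected with |S| even and has no odd component), and every maximal chain from ∅ to S has length |S|/2. -/

import Mathlib

/-- The restriction of a collection of finsets to subsets of `I`. -/
def BS.restrict (B : Finset (Finset ℕ)) (I : Finset ℕ) : Finset (Finset ℕ) :=
  B.filter (· ⊆ I)

/-- `B` is a building set on `S`. -/
def BS.IsBuilding (S : Finset ℕ) (B : Finset (Finset ℕ)) : Prop :=
  (∀ J ∈ B, J ⊆ S ∧ J.Nonempty) ∧
  (∀ i ∈ S, ({i} : Finset ℕ) ∈ B) ∧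
  (∀ I ∈ B, ∀ J ∈ B, (I ∩ J).Nonempty → I ∪ J ∈ B)

/-- `B` is chordal: every "suffix" `{x ∈ I : a ≤ x}` of an element `I` is in `B`. -/
def BS.IsChordal (B : Finset (Finset ℕ)) : Prop :=
  ∀ I ∈ B, ∀ a ∈ I, I.filter (fun x => a ≤ x) ∈ B

/-- A connected component of `B`: an inclusion-maximal element. -/
def BS.IsComponent (B : Finset (Finset ℕ)) (C : Finset ℕ) : Prop :=
  C ∈ B ∧ ∀ J ∈ B, C ⊆ J → J = C

/-- The restriction of `B` to `I` has no connected component of odd cardinality. -/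
def BS.NoOddComp (B : Finset (Finset ℕ)) (I : Finset ℕ) : Prop :=
  ∀ C ∈ BS.restrict B I, BS.IsComponent (BS.restrict B I) C → Even C.card

/-- The poset `P̂_B` of subsets of `S` whose restriction has no odd component. -/
def BS.hatP (B : Finset (Finset ℕ)) (S : Finset ℕ) : Set (Finset ℕ) :=
  {I | I ⊆ S ∧ BS.NoOddComp B I}

/-- `L` is a (one-line notation) permutation of the finite set `S`. -/
def BS.IsPermOf (S : Finset ℕ) (L : List ℕ) : Prop :=
  L.Nodup ∧ L.toFinset = S

/-- `L` is a `B`-permutation: each entry lies in the same connected component of the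
restriction of `B` to the prefix as the maximum of the prefix. -/
def BS.IsBPerm (B : Finset (Finset ℕ)) (S : Finset ℕ) (L : List ℕ) : Prop :=
  BS.IsPermOf S L ∧
  ∀ i, i < L.length →
    ∃ C : Finset ℕ, BS.IsComponent (BS.restrict B (L.take (i + 1)).toFinset) C ∧
      L.getD i 0 ∈ C ∧ ∃ M ∈ C, ∀ y ∈ (L.take (i + 1)).toFinset, y ≤ M

/-- `L` is alternating: `x₁ > x₂ < x₃ > x₄ < ⋯`. -/
def BS.IsAlternating (L : List ℕ) : Prop :=
  ∀ i, i + 1 < L.length →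
    (i % 2 = 0 → L.getD (i + 1) 0 < L.getD i 0) ∧
    (i % 2 = 1 → L.getD i 0 < L.getD (i + 1) 0)

/-- `I₂` covers `I₁` in the poset `P̂_B` ordered by inclusion. -/
def BS.Covers (B : Finset (Finset ℕ)) (S : Finset ℕ) (I₁ I₂ : Finset ℕ) : Prop :=
  I₁ ∈ BS.hatP B S ∧ I₂ ∈ BS.hatP B S ∧ I₁ ⊂ I₂ ∧
    ∀ J ∈ BS.hatP B S, I₁ ⊂ J → ¬ J ⊂ I₂

/-!
The components of the restriction of `B` to `Y` partition `Y`, and for `Y ⊆ X` every component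
of the restriction to `X` is a union of some of them. Hence, for `I₁ ⊂ I₂` in `hatP B S`, a
component `C` of the restriction to `I₂` that is not contained in `I₁` has an even number `≥ 2`
of elements outside `I₁`. Adding the two largest of these, `b < a`, to `I₁` stays in `hatP B S`:
by chordality the suffix of `C` starting at `b`, which lies in `I₁ ∪ {a, b}`, belongs to `B`,
so `a` and `b` fall into one component. Thus every cover relation adds exactly two elements, and
a saturated chain from `∅` to `S` has `|S| / 2` steps.
-/

lemma Finset.exists_mem_card_filter_ge_eq {α : Type*} [LinearOrder α] (D : Finset α) {n : ℕ}
    (hn : 0 < n) (hnD : n ≤ D.card) : ∃ b ∈ D, (D.filter (b ≤ ·)).card = n := by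
  classical
  induction D using Finset.induction_on_max generalizing n with
  | empty => simp at hnD; omega
  | insert a s has ih =>
    have has' : a ∉ s := fun h ↦ lt_irrefl a (has a h)
    rw [Finset.card_insert_of_notMem has'] at hnD
    rcases n with _ | _ | n
    · omega
    · refine ⟨a, Finset.mem_insert_self a s, ?_⟩
      rw [Finset.filter_insert, if_pos le_rfl,
        Finset.filter_false_of_mem fun x hx ↦ not_le.2 (has x hx)]
      rfl
    · obtain ⟨b, hb, hcard⟩ := ih (n := n + 1) (by omega) (by omega)
      refine ⟨b, Finset.mem_insert_of_mem hb, ?_⟩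
      rw [Finset.filter_insert, if_pos (has b hb).le,
        Finset.card_insert_of_notMem fun h ↦ has' (Finset.mem_filter.1 h).1, hcard]

lemma List.IsChain.apply_getLast_eq_add_mul {α : Type*} {R : α → α → Prop} (f : α → ℕ) {d : ℕ}
    (hR : ∀ x y, R x y → f y = f x + d) {c : List α} {x y : α} (hc : c.IsChain R)
    (hx : c.head? = some x) (hy : c.getLast? = some y) : f y = f x + d * (c.length - 1) := by
  induction c generalizing x with
  | nil => simp at hx
  | cons a l ih =>
    obtain rfl : a = x := Option.some.inj hx
    cases l with
    | nil => simp_all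
    | cons b l =>
      rw [List.isChain_cons_cons] at hc
      rw [List.getLast?_cons_cons] at hy
      rw [ih hc.2 rfl hy, hR a b hc.1]
      simp only [List.length_cons, Nat.add_sub_cancel]
      ring

namespace BS

variable {S : Finset ℕ} {B : Finset (Finset ℕ)}

lemma mem_restrict {I J : Finset ℕ} : J ∈ restrict B I ↔ J ∈ B ∧ J ⊆ I := by
  simp [restrict]

lemma restrict_mono {X Y : Finset ℕ} (h : Y ⊆ X) : restrict B Y ⊆ restrict B X := fun _ hJ ↦
  mem_restrict.2 ⟨(mem_restrict.1 hJ).1, (mem_restrict.1 hJ).2.trans h⟩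

lemma exists_isComponent_superset {X P : Finset ℕ} (hP : P ∈ restrict B X) :
    ∃ C, IsComponent (restrict B X) C ∧ P ⊆ C := by
  classical
  obtain ⟨C, hC, hmax⟩ :=
    Finset.exists_max_image ((restrict B X).filter (P ⊆ ·)) Finset.card ⟨P, by simp [hP]⟩
  rw [Finset.mem_filter] at hC
  refine ⟨C, ⟨hC.1, fun J hJ hCJ ↦ ?_⟩, hC.2⟩
  exact (Finset.eq_of_subset_of_card_le hCJ (hmax J (by simp [hJ, hC.2.trans hCJ]))).symm

variable (hB : IsBuilding S B)
include hB

lemma IsComponent.subset_of_inter_nonempty {X K P : Finset ℕ}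
    (hK : IsComponent (restrict B X) K) (hP : P ∈ restrict B X) (h : (P ∩ K).Nonempty) :
    P ⊆ K := by
  have hPK : P ∪ K ∈ restrict B X :=
    mem_restrict.2 ⟨hB.2.2 P (mem_restrict.1 hP).1 K (mem_restrict.1 hK.1).1 h,
      Finset.union_subset (mem_restrict.1 hP).2 (mem_restrict.1 hK.1).2⟩
  rw [← hK.2 _ hPK Finset.subset_union_right]
  exact Finset.subset_union_left

lemma IsComponent.eq_of_inter_nonempty {X C C' : Finset ℕ}
    (hC : IsComponent (restrict B X) C) (hC' : IsComponent (restrict B X) C')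
    (h : (C ∩ C').Nonempty) : C = C' :=
  (hC.2 C' hC'.1 (hC'.subset_of_inter_nonempty hB hC.1 h)).symm

lemma empty_mem_hatP : ∅ ∈ hatP B S := by
  refine ⟨Finset.empty_subset S, fun C hC _ ↦ ?_⟩
  obtain ⟨hCB, hC_empty⟩ := mem_restrict.1 hC
  exact absurd (Finset.subset_empty.1 hC_empty) (hB.1 C hCB).2.ne_empty

lemma even_card_inter_of_isComponent {X Y K : Finset ℕ} (hY : Y ∈ hatP B S) (hYX : Y ⊆ X)
    (hK : IsComponent (restrict B X) K) : Even (Y ∩ K).card := by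
  classical
  set T := (restrict B Y).filter (fun P ↦ IsComponent (restrict B Y) P ∧ P ⊆ K)
  have hcover : Y ∩ K = T.biUnion id := by
    ext x
    simp only [Finset.mem_inter, Finset.mem_biUnion, Finset.mem_filter, id, T]
    constructor
    · rintro ⟨hxY, hxK⟩
      obtain ⟨P, hP, hxP⟩ := exists_isComponent_superset
        (mem_restrict.2 ⟨hB.2.1 x (hY.1 hxY), Finset.singleton_subset_iff.2 hxY⟩)
      replace hxP := hxP (Finset.mem_singleton_self x)
      have hPK : P ⊆ K := hK.subset_of_inter_nonempty hB (restrict_mono hYX hP.1)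
        ⟨x, Finset.mem_inter.2 ⟨hxP, hxK⟩⟩
      exact ⟨P, ⟨hP.1, hP, hPK⟩, hxP⟩
    · rintro ⟨P, ⟨hPY, -, hPK⟩, hxP⟩
      exact ⟨(mem_restrict.1 hPY).2 hxP, hPK hxP⟩
  have hdisj : (T : Set (Finset ℕ)).PairwiseDisjoint id := by
    intro P hP Q hQ hPQ
    rw [Finset.coe_filter] at hP hQ
    exact Finset.disjoint_iff_inter_eq_empty.2 <| Finset.not_nonempty_iff_eq_empty.1 fun h ↦
      hPQ (hP.2.1.eq_of_inter_nonempty hB hQ.2.1 h)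
  rw [hcover, Finset.card_biUnion hdisj]
  exact Finset.even_sum _ fun P hP ↦ hY.2 P (Finset.mem_filter.1 hP).1 (Finset.mem_filter.1 hP).2.1

lemma union_mem_hatP {I P T : Finset ℕ} (hI : I ∈ hatP B S) (hPS : P ⊆ S) (hIP : Disjoint I P)
    (hP : Even P.card) (hT : T ∈ B) (hPT : P ⊆ T) (hTI : T ⊆ I ∪ P) : I ∪ P ∈ hatP B S := by
  refine ⟨Finset.union_subset hI.1 hPS, fun K hKmem hK ↦ ?_⟩
  have hKI : Even (K ∩ I).card :=
    Finset.inter_comm I K ▸ even_card_inter_of_isComponent hB hI Finset.subset_union_left hK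
  have hKP : K \ I ⊆ P := sdiff_le_iff.2 (mem_restrict.1 hKmem).2
  have hsdiff : K \ I = ∅ ∨ K \ I = P := by
    refine (K \ I).eq_empty_or_nonempty.imp id fun ⟨x, hx⟩ ↦ hKP.antisymm fun y hy ↦ ?_
    have hTK : T ⊆ K := hK.subset_of_inter_nonempty hB (mem_restrict.2 ⟨hT, hTI⟩)
      ⟨x, Finset.mem_inter.2 ⟨hPT (hKP hx), (Finset.mem_sdiff.1 hx).1⟩⟩
    exact Finset.mem_sdiff.2 ⟨hTK (hPT hy), Finset.disjoint_right.1 hIP hy⟩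
  rw [← Finset.card_inter_add_card_sdiff K I]
  rcases hsdiff with h | h <;> rw [h]
  · simpa using hKI
  · exact hKI.add hP

lemma exists_mem_hatP_card_eq_add_two (hc : IsChordal B) {I₁ I₂ : Finset ℕ}
    (h₁ : I₁ ∈ hatP B S) (h₂ : I₂ ∈ hatP B S) (hlt : I₁ ⊂ I₂) :
    ∃ J ∈ hatP B S, I₁ ⊂ J ∧ J ⊆ I₂ ∧ J.card = I₁.card + 2 := by
  obtain ⟨d, hdI₂, hdI₁⟩ := Finset.exists_of_ssubset hlt
  obtain ⟨C, hC, hdC⟩ := exists_isComponent_superset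
    (mem_restrict.2 ⟨hB.2.1 d (h₂.1 hdI₂), Finset.singleton_subset_iff.2 hdI₂⟩)
  obtain ⟨hCB, hCI₂⟩ := mem_restrict.1 hC.1
  have hD : Even (C \ I₁).card := by
    have hCeven : Even C.card := h₂.2 C hC.1 hC
    have hCI₁ : Even (C ∩ I₁).card :=
      Finset.inter_comm I₁ C ▸ even_card_inter_of_isComponent hB h₁ hlt.1 hC
    rw [← Finset.card_sdiff_add_card_inter C I₁] at hCeven
    exact (Nat.even_add.1 hCeven).2 hCI₁
  have hD₂ : 2 ≤ (C \ I₁).card := by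
    have : 0 < (C \ I₁).card :=
      Finset.card_pos.2 ⟨d, Finset.mem_sdiff.2 ⟨hdC (Finset.mem_singleton_self d), hdI₁⟩⟩
    obtain ⟨m, hm⟩ := hD
    omega
  obtain ⟨b, hb, hPcard⟩ := (C \ I₁).exists_mem_card_filter_ge_eq two_pos hD₂
  -- the two largest elements of `C \ I₁`
  set P := (C \ I₁).filter (b ≤ ·)
  have hPC : P ⊆ C \ I₁ := Finset.filter_subset _ _
  have hPI₂ : P ⊆ I₂ := hPC.trans (Finset.sdiff_subset.trans hCI₂)
  have hIP : Disjoint I₁ P := Finset.disjoint_of_subset_right hPC Finset.disjoint_sdiff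
  have hbP : b ∈ P := Finset.mem_filter.2 ⟨hb, le_rfl⟩
  have hsuffix : C.filter (b ≤ ·) ⊆ I₁ ∪ P := fun x hx ↦ by
    obtain ⟨hxC, hbx⟩ := Finset.mem_filter.1 hx
    by_cases hxI₁ : x ∈ I₁
    · exact Finset.mem_union_left P hxI₁
    · exact Finset.mem_union_right I₁ (Finset.mem_filter.2 ⟨Finset.mem_sdiff.2 ⟨hxC, hxI₁⟩, hbx⟩)
  refine ⟨I₁ ∪ P, union_mem_hatP hB h₁ (hPI₂.trans h₂.1) hIP (hPcard ▸ even_two)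
      (hc C hCB b (Finset.mem_sdiff.1 hb).1) (Finset.filter_subset_filter _ Finset.sdiff_subset)
      hsuffix, ?_, Finset.union_subset hlt.1 hPI₂, ?_⟩
  · exact (Finset.ssubset_iff_of_subset Finset.subset_union_left).2
      ⟨b, Finset.mem_union_right I₁ hbP, Finset.disjoint_right.1 hIP hbP⟩
  · rw [Finset.card_union_of_disjoint hIP, hPcard]

lemma Covers.card_eq_add_two (hc : IsChordal B) {I₁ I₂ : Finset ℕ} (h : Covers B S I₁ I₂) :
    I₂.card = I₁.card + 2 := by
  obtain ⟨h₁, h₂, hlt, hcov⟩ := h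
  obtain ⟨J, hJ, hI₁J, hJI₂, hJcard⟩ := exists_mem_hatP_card_eq_add_two hB hc h₁ h₂ hlt
  obtain rfl : J = I₂ := (LE.le.eq_or_ssubset hJI₂).resolve_right (hcov J hJ hI₁J)
  exact hJcard

end BS

theorem hatP_bounded_graded_general (S : Finset ℕ) (B : Finset (Finset ℕ)) (k : ℕ)
    (hB : BS.IsBuilding S B) (hc : BS.IsChordal B)
    (hS : S.card = 2 * k) (hno : BS.NoOddComp B S) :
    (∅ : Finset ℕ) ∈ BS.hatP B S ∧ S ∈ BS.hatP B S ∧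
    ∀ c : List (Finset ℕ), c.Chain' (BS.Covers B S) →
      c.head? = some ∅ → c.getLast? = some S → c.length = k + 1 := by
  refine ⟨BS.empty_mem_hatP hB, ⟨subset_rfl, hno⟩, fun c hchain hhead hlast ↦ ?_⟩
  have hcard := List.IsChain.apply_getLast_eq_add_mul Finset.card
    (fun _ _ h ↦ h.card_eq_add_two hB hc) hchain hhead hlast
  have hlen : 0 < c.length := List.length_pos_of_ne_nil (by rintro rfl; simp at hhead)
  rw [Finset.card_empty, hS] at hcard
  omega

/-- For a connected chordal building set `B` on `S` of even cardinality `2k` with no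
odd component, the poset `P̂_B` is bounded and graded: `∅` is the least element, `S` is
the greatest element, and every maximal (i.e. saturated) chain from `∅` to `S` has
`k + 1` elements. -/
theorem hatP_bounded_graded (S : Finset ℕ) (B : Finset (Finset ℕ)) (k : ℕ)
    (hB : BS.IsBuilding S B) (hc : BS.IsChordal B) (hconn : S ∈ B)
    (hS : S.card = 2 * k) (hno : BS.NoOddComp B S) :
    (∅ : Finset ℕ) ∈ BS.hatP B S ∧ S ∈ BS.hatP B S ∧
    ∀ c : List (Finset ℕ), c.Chain' (BS.Covers B S) →
      c.head? = some ∅ → c.getLast? = some S → c.length = k + 1 :=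
  hatP_bounded_graded_general S B k hB hc hS hno
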